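/- arXiv:1901.09363 — 3 statements merged into one kernel-verified Lean document; each statement's English description precedes it below -/
import Mathlib

section
/- A relational structure R admits a finite monomorphic decomposition if and only if there exists an integer ℓ such that every finite induced substructure of R admits a monomorphic decomposition into at most ℓ blocks. -/
/-- A relational structure of signature `ar : ι → ℕ`: a domain `V` together with,
for each `i : ι`, an `ar i`-ary relation on `V`. -/
structure RelStruct (ι : Type) (ar : ι → ℕ) where
  V : Type
  rel : ∀ i : ι, (Fin (ar i) → V) → Prop

namespace RelStruct

variable {ι : Type} {ar : ι → ℕ}

/-- The substructure induced on a subset `A` of the domain. -/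
def restrict (R : RelStruct ι ar) (A : Set R.V) : RelStruct ι ar where
  V := A
  rel := fun i f => R.rel i fun j => (f j : R.V)

/-- Isomorphism of relational structures: a bijection of the domains transporting
each relation onto the corresponding one. -/
def Iso (R S : RelStruct ι ar) : Prop :=
  ∃ e : R.V ≃ S.V, ∀ (i : ι) (f : Fin (ar i) → R.V), R.rel i f ↔ S.rel i fun j => e (f j)

/-- `R` embeds in `S` if `R` is isomorphic to an induced substructure of `S`. -/
def Embeds (R S : RelStruct ι ar) : Prop :=
  ∃ A : Set S.V, Iso R (S.restrict A)

/-- `B` is a monomorphic part of `R`: any two finite subsets of the domain of the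
same cardinality which agree outside `B` induce isomorphic substructures. -/
def MonoPart (R : RelStruct ι ar) (B : Set R.V) : Prop :=
  ∀ A A' : Set R.V, A.Finite → A'.Finite → A.ncard = A'.ncard →
    A \ B = A' \ B → Iso (R.restrict A) (R.restrict A')

/-- A monomorphic decomposition of `R`: a partition of the domain into monomorphic parts. -/
def MonoDecomp (R : RelStruct ι ar) (P : Set (Set R.V)) : Prop :=
  Setoid.IsPartition P ∧ ∀ B ∈ P, R.MonoPart B

/-- `R` has a monomorphic decomposition with finitely many blocks. -/
def HasFiniteMonoDecomp (R : RelStruct ι ar) : Prop :=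
  ∃ P : Set (Set R.V), R.MonoDecomp P ∧ P.Finite

/-- The age of `R`: the class of finite structures embeddable in `R`. -/
def Age (R : RelStruct ι ar) : Set (RelStruct ι ar) :=
  {S | Finite S.V ∧ Embeds S R}

/-- A hereditary class of finite structures: all members are finite, and every
structure embeddable in a member is again a member. -/
def Hereditary (C : Set (RelStruct ι ar)) : Prop :=
  (∀ R ∈ C, Finite R.V) ∧ ∀ R ∈ C, ∀ S : RelStruct ι ar, Embeds S R → S ∈ C

/-- `x` and `y` are `F`-equivalent: the substructures induced on `{x} ∪ F` and
`{y} ∪ F` are isomorphic. -/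
def EqF (R : RelStruct ι ar) (F : Set R.V) (x y : R.V) : Prop :=
  Iso (R.restrict (insert x F)) (R.restrict (insert y F))

/-- `x ≃_{m,R} y`: `x` and `y` are `F`-equivalent for every `m`-element subset `F`
of `V \ {x, y}`. -/
def EqM (R : RelStruct ι ar) (m : ℕ) (x y : R.V) : Prop :=
  ∀ F : Set R.V, F.Finite → F.ncard = m → x ∉ F → y ∉ F → EqF R F x y

/-- `x ≃_{≤m,R} y`: `x ≃_{m',R} y` for every `m' ≤ m`. -/
def EqLe (R : RelStruct ι ar) (m : ℕ) (x y : R.V) : Prop :=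
  ∀ m' ≤ m, EqM R m' x y

/-- `x ≃_R y`: `x ≃_{m,R} y` for every `m`. -/
def EqR (R : RelStruct ι ar) (x y : R.V) : Prop :=
  ∀ m : ℕ, EqM R m x y

/-- The profile of `R`: the number of induced substructures on `n`-element subsets
of the domain, counted up to isomorphism. -/
noncomputable def profileR (R : RelStruct ι ar) (n : ℕ) : ℕ :=
  Nat.card (Quot fun (A B : {A : Set R.V // A.Finite ∧ A.ncard = n}) =>
    Iso (R.restrict A.1) (R.restrict B.1))

end RelStruct

/-!
Write `x ≃ y` when `{x} ∪ F` and `{y} ∪ F` induce isomorphic substructures for every finite `F`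
avoiding `x` and `y`. This is an equivalence relation whose classes are monomorphic parts: two
finite sets of equal size that agree outside a class are joined by exchanging one point of the
class at a time. Conversely, two points in one block of a monomorphic decomposition of a finite
substructure are `F`-equivalent for every `F` inside that substructure. Hence `ℓ + 1` pairwise
inequivalent points, together with witnesses of their inequivalence, would span a finite
substructure needing more than `ℓ` blocks, so `≃` has at most `ℓ` classes. The converse direction
just restricts a finite decomposition to the finite substructure.
-/

theorem Setoid.finite_classes_of_ncard_le {α : Type*} (s : Setoid α) (ℓ : ℕ)
    (h : ∀ S : Set α, S.Finite → S.Pairwise (fun x y => ¬ s x y) → S.ncard ≤ ℓ) :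
    s.classes.Finite := by
  suffices Finite (Quotient s) from Set.finite_coe_iff.1 (.of_equiv _ s.quotientEquivClasses)
  by_contra hinf
  rw [not_finite_iff_infinite] at hinf
  obtain ⟨t, ht⟩ := Infinite.exists_subset_card_eq (Quotient s) (ℓ + 1)
  have hpair : (Quotient.out '' (t : Set (Quotient s))).Pairwise fun x y => ¬ s x y := by
    rintro _ ⟨p, -, rfl⟩ _ ⟨q, -, rfl⟩ hne hpq
    exact hne (congrArg _ (Quotient.out_equiv_out.1 hpq))
  have := h _ (t.finite_toSet.image _) hpair
  rw [Set.ncard_image_of_injective _ Quotient.out_injective, Set.ncard_coe_finset, ht] at this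
  omega

namespace RelStruct

variable {ι : Type} {ar : ι → ℕ} {R : RelStruct ι ar}

theorem Iso.refl (R : RelStruct ι ar) : Iso R R :=
  ⟨Equiv.refl _, fun _ _ => Iff.rfl⟩

protected theorem Iso.symm {S : RelStruct ι ar} (h : Iso R S) : Iso S R := by
  obtain ⟨e, he⟩ := h
  exact ⟨e.symm, fun i f => by rw [he i (fun j => e.symm (f j))]; simp⟩

protected theorem Iso.trans {S T : RelStruct ι ar} (h : Iso R S) (h' : Iso S T) : Iso R T := by
  obtain ⟨e, he⟩ := h
  obtain ⟨e', he'⟩ := h'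
  exact ⟨e.trans e', fun i f => (he i f).trans (he' i _)⟩

theorem iso_restrict_of_eq {A B : Set R.V} (h : A = B) : Iso (R.restrict A) (R.restrict B) :=
  h ▸ Iso.refl _

theorem iso_restrict_restrict (A : Set R.V) (S : Set A) :
    Iso ((R.restrict A).restrict S) (R.restrict (Subtype.val '' S)) :=
  ⟨Equiv.Set.image Subtype.val S Subtype.val_injective, fun _ _ => Iff.rfl⟩

theorem eqR_iff {x y : R.V} :
    EqR R x y ↔ ∀ F : Set R.V, F.Finite → x ∉ F → y ∉ F → EqF R F x y :=
  ⟨fun h F hF hx hy => h _ F hF rfl hx hy, fun h _ F hF _ hx hy => h F hF hx hy⟩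

theorem EqR.refl (x : R.V) : EqR R x x :=
  fun _ _ _ _ _ _ => Iso.refl _

protected theorem EqR.symm {x y : R.V} (h : EqR R x y) : EqR R y x :=
  fun m F hF hc hx hy => (h m F hF hc hy hx).symm

protected theorem EqR.trans {x y z : R.V} (hxy : EqR R x y) (hyz : EqR R y z) : EqR R x z := by
  rw [eqR_iff] at *
  intro F hF hx hz
  by_cases hxz : x = z
  · subst hxz
    exact Iso.refl _
  by_cases hy : y ∈ F
  swap
  · exact (hxy F hF hx hy).trans (hyz F hF hy hz)
  -- `y ∈ F`: exchange `y` for `z` over the base `{x} ∪ F \ {y}`, then `x` for `y` over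
  -- `{z} ∪ F \ {y}`.
  set F₀ := F \ {y}
  have hyx : y ≠ x := fun h => hx (h ▸ hy)
  have hyz' : y ≠ z := fun h => hz (h ▸ hy)
  have hzx : EqF R (insert x F₀) y z :=
    hyz _ (hF.sdiff.insert x) (by simp [F₀, hyx]) (by simp [F₀, Ne.symm hxz, hz])
  have hxy' : EqF R (insert z F₀) x y :=
    hxy _ (hF.sdiff.insert z) (by simp [F₀, hxz, hx]) (by simp [F₀, hyz'])
  unfold EqF at hzx hxy' ⊢
  rw [Set.insert_comm z x] at hzx
  rw [← Set.insert_sdiff_self_of_mem hy, Set.insert_comm x y, Set.insert_comm z y]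
  exact hzx.trans hxy'

def eqRSetoid (R : RelStruct ι ar) : Setoid R.V :=
  ⟨EqR R, ⟨EqR.refl, EqR.symm, EqR.trans⟩⟩

theorem iso_restrict_exchange {A : Set R.V} {a a' : R.V} (hA : A.Finite) (ha : a ∈ A)
    (ha' : a' ∉ A) (h : EqR R a a') :
    Iso (R.restrict A) (R.restrict (insert a' (A \ {a}))) := by
  have := eqR_iff.1 h (A \ {a}) hA.sdiff (by simp) (fun h => ha' h.1)
  rwa [EqF, Set.insert_sdiff_self_of_mem ha] at this

theorem monoPart_of_pairwise_eqR {C : Set R.V} (hC : ∀ u ∈ C, ∀ v ∈ C, EqR R u v) :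
    MonoPart R C := by
  suffices ∀ n, ∀ A A' : Set R.V, A.Finite → A'.Finite → A.ncard = A'.ncard →
      A \ C = A' \ C → (A \ A').ncard = n → Iso (R.restrict A) (R.restrict A') from
    fun A A' hA hA' hcard hdiff => this _ A A' hA hA' hcard hdiff rfl
  intro n
  induction n with
  | zero =>
    intro A A' hA hA' hcard _ hn
    have hsub : A ⊆ A' := Set.sdiff_eq_empty.1 ((Set.ncard_eq_zero hA.sdiff).1 hn)
    exact iso_restrict_of_eq (Set.eq_of_subset_of_ncard_le hsub hcard.ge hA')
  | succ n ih =>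
    intro A A' hA hA' hcard hdiff hn
    obtain ⟨a, haA, haA'⟩ : (A \ A').Nonempty := (Set.ncard_pos hA.sdiff).1 (by omega)
    obtain ⟨a', ha'A', ha'A⟩ : (A' \ A).Nonempty := by
      rw [← Set.ncard_pos hA'.sdiff,
        ← (Set.ncard_eq_ncard_iff_ncard_sdiff_eq_ncard_sdiff hA hA').1 hcard]
      omega
    have haC : a ∈ C := by_contra fun h => haA' (hdiff.subset ⟨haA, h⟩).1
    have ha'C : a' ∈ C := by_contra fun h => ha'A (hdiff.symm.subset ⟨ha'A', h⟩).1
    refine (iso_restrict_exchange hA haA ha'A (hC a haC a' ha'C)).trans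
      (ih _ A' (hA.sdiff.insert a') hA' ?_ ?_ ?_)
    · rw [Set.ncard_exchange ha'A haA, hcard]
    · rw [Set.insert_sdiff_of_mem _ ha'C, sdiff_sdiff_comm,
        Set.sdiff_singleton_eq_self (fun h => h.2 haC), hdiff]
    · rw [Set.insert_sdiff_of_mem _ ha'A', sdiff_sdiff_comm,
        Set.ncard_sdiff_singleton_of_mem (show a ∈ A \ A' from ⟨haA, haA'⟩), hn,
        Nat.add_sub_cancel]

theorem monoDecomp_eqRSetoid_classes (R : RelStruct ι ar) :
    MonoDecomp R (eqRSetoid R).classes := by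
  refine ⟨Setoid.isPartition_classes _, ?_⟩
  rintro _ ⟨y, rfl⟩
  exact monoPart_of_pairwise_eqR fun u hu v hv => EqR.trans hu (EqR.symm hv)

theorem MonoPart.preimage_val {B : Set R.V} (hB : MonoPart R B) (A : Set R.V) :
    MonoPart (R.restrict A) (Subtype.val ⁻¹' B) := by
  intro (A₁ : Set A) (A₂ : Set A) h₁ h₂ hcard hdiff
  have hdiff' : Subtype.val '' A₁ \ B = Subtype.val '' A₂ \ B := by
    rw [← Set.image_sdiff_preimage, ← Set.image_sdiff_preimage]
    exact congrArg _ hdiff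
  have hcard' : (Subtype.val '' A₁).ncard = (Subtype.val '' A₂).ncard := by
    rw [Set.ncard_image_of_injective _ Subtype.val_injective,
      Set.ncard_image_of_injective _ Subtype.val_injective]
    exact hcard
  exact (iso_restrict_restrict A A₁).trans
    ((hB _ _ (h₁.image _) (h₂.image _) hcard' hdiff').trans (iso_restrict_restrict A A₂).symm)

theorem MonoDecomp.restrict {P : Set (Set R.V)} (hP : MonoDecomp R P) (A : Set R.V) :
    MonoDecomp (R.restrict A) (Set.preimage Subtype.val '' P \ {∅}) := by
  refine ⟨⟨fun h => h.2 rfl, fun a => ?_⟩, ?_⟩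
  · obtain ⟨B, ⟨hBP, haB⟩, huniq⟩ := hP.1.2 a.1
    refine ⟨Subtype.val ⁻¹' B, ⟨⟨⟨B, hBP, rfl⟩, Set.nonempty_iff_ne_empty.1 ⟨a, haB⟩⟩, haB⟩, ?_⟩
    rintro _ ⟨⟨⟨B', hB'P, rfl⟩, -⟩, haB'⟩
    rw [huniq B' ⟨hB'P, haB'⟩]
  · rintro _ ⟨⟨B, hBP, rfl⟩, -⟩
    exact (hP.2 B hBP).preimage_val A

theorem MonoDecomp.exists_restrict_ncard_le {P : Set (Set R.V)} (hP : MonoDecomp R P)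
    (hPfin : P.Finite) (A : Set R.V) :
    ∃ Q : Set (Set (R.restrict A).V),
      (R.restrict A).MonoDecomp Q ∧ Q.Finite ∧ Q.ncard ≤ P.ncard :=
  ⟨_, hP.restrict A, (hPfin.image _).sdiff,
    (Set.ncard_le_ncard Set.sdiff_subset (hPfin.image _)).trans (Set.ncard_image_le hPfin)⟩

theorem MonoPart.eqF {B : Set R.V} (hB : MonoPart R B) {x y : R.V} (hx : x ∈ B) (hy : y ∈ B)
    {F : Set R.V} (hF : F.Finite) (hxF : x ∉ F) (hyF : y ∉ F) : EqF R F x y :=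
  hB _ _ (hF.insert x) (hF.insert y)
    (by rw [Set.ncard_insert_of_notMem hxF hF, Set.ncard_insert_of_notMem hyF hF])
    (by rw [Set.insert_sdiff_of_mem _ hx, Set.insert_sdiff_of_mem _ hy])

theorem eqF_of_eqF_restrict {A F : Set R.V} (hFA : F ⊆ A) {x y : A}
    (h : EqF (R.restrict A) (Subtype.val ⁻¹' F) x y) : EqF R F x y := by
  have himage : ∀ z : A, Subtype.val '' insert z (Subtype.val ⁻¹' F) = insert z.1 F := by
    intro z
    rw [Set.image_insert_eq, Subtype.image_preimage_coe, Set.inter_eq_self_of_subset_right hFA]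
  have hx := iso_restrict_restrict A (insert x (Subtype.val ⁻¹' F))
  have hy := iso_restrict_restrict A (insert y (Subtype.val ⁻¹' F))
  rw [himage] at hx hy
  exact hx.symm.trans (h.trans hy)

theorem ncard_le_of_pairwise_not_eqR {ℓ : ℕ}
    (hℓ : ∀ A : Set R.V, A.Finite → ∃ P : Set (Set (R.restrict A).V),
      (R.restrict A).MonoDecomp P ∧ P.Finite ∧ P.ncard ≤ ℓ)
    {S : Set R.V} (hS : S.Finite) (hSne : S.Pairwise fun x y => ¬ EqR R x y) :
    S.ncard ≤ ℓ := by
  have hwitness : ∀ x y : R.V, ∃ F : Set R.V,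
      F.Finite ∧ (¬ EqR R x y → x ∉ F ∧ y ∉ F ∧ ¬ EqF R F x y) := by
    intro x y
    by_cases h : EqR R x y
    · exact ⟨∅, Set.finite_empty, fun h' => (h' h).elim⟩
    · simp only [eqR_iff, not_forall] at h
      obtain ⟨F, hF, hx, hy, hne⟩ := h
      exact ⟨F, hF, fun _ => ⟨hx, hy, hne⟩⟩
  choose W hWfin hW using hwitness
  set A := S ∪ ⋃ x ∈ S, ⋃ y ∈ S, W x y
  have hA : A.Finite := hS.union (hS.biUnion fun x _ => hS.biUnion fun y _ => hWfin x y)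
  obtain ⟨P, hP, hPfin, hPℓ⟩ := hℓ A hA
  choose block hblock using fun a => (hP.1.2 a).exists
  have hinj : Set.InjOn block (Subtype.val ⁻¹' S : Set A) := by
    intro (a : A) ha (b : A) hb hab
    by_contra hne
    obtain ⟨haW, hbW, hnot⟩ := hW a b (hSne ha hb (Subtype.val_injective.ne hne))
    have hWA : W a b ⊆ A := fun v hv =>
      Or.inr (Set.mem_biUnion ha (Set.mem_biUnion hb hv))
    refine hnot (eqF_of_eqF_restrict hWA ?_)
    exact (hP.2 _ (hblock a).1).eqF (hblock a).2 (hab ▸ (hblock b).2)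
      ((hWfin a b).preimage Subtype.val_injective.injOn) haW hbW
  calc S.ncard = (Subtype.val ⁻¹' S : Set A).ncard :=
        (Set.ncard_preimage_of_injective_subset_range Subtype.val_injective
          (by rw [Subtype.range_coe]; exact Set.subset_union_left)).symm
    _ ≤ P.ncard := Set.ncard_le_ncard_of_injOn block (fun a _ => (hblock a).1) hinj hPfin
    _ ≤ ℓ := hPℓ

end RelStruct

open RelStruct

/-- A relational structure `R` admits a finite monomorphic decomposition iff
there is an integer `ℓ` such that every finite induced substructure of `R` admits a
monomorphic decomposition into at most `ℓ` blocks. -/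
theorem hasFiniteMonoDecomp_iff_bounded_on_finite_restrictions
    {ι : Type} {ar : ι → ℕ} (R : RelStruct ι ar) :
    R.HasFiniteMonoDecomp ↔
      ∃ ℓ : ℕ, ∀ A : Set R.V, A.Finite →
        ∃ P : Set (Set (R.restrict A).V),
          (R.restrict A).MonoDecomp P ∧ P.Finite ∧ P.ncard ≤ ℓ := by
  constructor
  · rintro ⟨P, hP, hPfin⟩
    exact ⟨P.ncard, fun A _ => hP.exists_restrict_ncard_le hPfin A⟩
  · rintro ⟨ℓ, hℓ⟩
    exact ⟨_, monoDecomp_eqRSetoid_classes R, Setoid.finite_classes_of_ncard_le _ ℓ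
      fun _ => ncard_le_of_pairwise_not_eqR hℓ⟩
end

section
/- Let R = (V, ≤, (ρ_i)_{i∈I}) be an ordered binary structure and let A ⊆ V. If A is an interval of the linear order (V, ≤) and any two elements of A are ≃_{≤1,R}-equivalent, then any two elements of A are ≃_{≤2,R}-equivalent. -/
/-- An ordered binary structure: a domain `V`, a linear order `le` on `V`,
and a family of binary relations `rel i` on `V` indexed by `ι`. -/
structure OrdBin (ι : Type) where
  V : Type
  le : V → V → Prop
  linear : IsLinearOrder V le
  rel : ι → V → V → Prop

namespace OrdBin

variable {ι : Type}

/-- The substructure induced on a subset `A` of the domain. -/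
def restrict (R : OrdBin ι) (A : Set R.V) : OrdBin ι where
  V := A
  le := fun a b => R.le a.1 b.1
  linear := by
    haveI := R.linear
    exact
      { refl := fun a => refl_of R.le a.1
        trans := fun a b c hab hbc => trans_of R.le hab hbc
        antisymm := fun a b hab hba => Subtype.ext (antisymm_of R.le hab hba)
        total := fun a b => total_of R.le a.1 b.1 }
  rel := fun i a b => R.rel i a.1 b.1

/-- Isomorphism of ordered binary structures: a bijection of the domains preserving
the linear order and each binary relation. -/
def Iso (R S : OrdBin ι) : Prop :=
  ∃ e : R.V ≃ S.V, (∀ x y : R.V, R.le x y ↔ S.le (e x) (e y)) ∧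
    ∀ (i : ι) (x y : R.V), R.rel i x y ↔ S.rel i (e x) (e y)

/-- `R` embeds in `S` if `R` is isomorphic to an induced substructure of `S`. -/
def Embeds (R S : OrdBin ι) : Prop :=
  ∃ A : Set S.V, Iso R (S.restrict A)

/-- `B` is a monomorphic part of `R`: any two finite subsets of the domain of the
same cardinality which agree outside `B` induce isomorphic substructures. -/
def MonoPart (R : OrdBin ι) (B : Set R.V) : Prop :=
  ∀ A A' : Set R.V, A.Finite → A'.Finite → A.ncard = A'.ncard →
    A \ B = A' \ B → Iso (R.restrict A) (R.restrict A')

/-- A monomorphic decomposition of `R`: a partition of the domain into monomorphic parts. -/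
def MonoDecomp (R : OrdBin ι) (P : Set (Set R.V)) : Prop :=
  Setoid.IsPartition P ∧ ∀ B ∈ P, R.MonoPart B

/-- `R` has a monomorphic decomposition with finitely many blocks. -/
def HasFiniteMonoDecomp (R : OrdBin ι) : Prop :=
  ∃ P : Set (Set R.V), R.MonoDecomp P ∧ P.Finite

/-- A hereditary class of finite ordered binary structures. -/
def Hereditary (C : Set (OrdBin ι)) : Prop :=
  (∀ R ∈ C, Finite R.V) ∧ ∀ R ∈ C, ∀ S : OrdBin ι, Embeds S R → S ∈ C

/-- `x` and `y` are `F`-equivalent: the substructures induced on `{x} ∪ F` and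
`{y} ∪ F` are isomorphic. -/
def EqF (R : OrdBin ι) (F : Set R.V) (x y : R.V) : Prop :=
  Iso (R.restrict (insert x F)) (R.restrict (insert y F))

/-- `x ≃_{m,R} y`: `x` and `y` are `F`-equivalent for every `m`-element subset `F`
of `V \ {x, y}`. -/
def EqM (R : OrdBin ι) (m : ℕ) (x y : R.V) : Prop :=
  ∀ F : Set R.V, F.Finite → F.ncard = m → x ∉ F → y ∉ F → EqF R F x y

/-- `x ≃_{≤m,R} y`: `x ≃_{m',R} y` for every `m' ≤ m`. -/
def EqLe (R : OrdBin ι) (m : ℕ) (x y : R.V) : Prop :=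
  ∀ m' ≤ m, EqM R m' x y

/-- `x ≃_R y`: `x ≃_{m,R} y` for every `m`. -/
def EqR (R : OrdBin ι) (x y : R.V) : Prop :=
  ∀ m : ℕ, EqM R m x y

/-- `d(x,y) = d(x',y')`: the pair of truth values `(ρ_i(x,y), ρ_i(y,x))` agrees with
`(ρ_i(x',y'), ρ_i(y',x'))` for every `i`. -/
def dEq (R : OrdBin ι) (x y x' y' : R.V) : Prop :=
  ∀ i : ι, (R.rel i x y ↔ R.rel i x' y') ∧ (R.rel i y x ↔ R.rel i y' x')

/-- `A` is an interval of the linear order `(V, le)`. -/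
def IntervalLe (R : OrdBin ι) (A : Set R.V) : Prop :=
  ∀ u ∈ A, ∀ w ∈ A, ∀ z : R.V, R.le u z → R.le z w → z ∈ A

/-- `A` is an interval of `R`: an interval of the order such that all elements of `A`
have the same relations to each element outside `A`. -/
def IntervalR (R : OrdBin ι) (A : Set R.V) : Prop :=
  IntervalLe R A ∧ ∀ u ∈ A, ∀ u' ∈ A, ∀ w ∉ A, dEq R u w u' w

/-- `R` is `n`-monomorphic: the substructures induced on any two `n`-element subsets
of the domain are isomorphic. -/
def NMono (R : OrdBin ι) (n : ℕ) : Prop :=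
  ∀ A A' : Set R.V, A.Finite → A'.Finite → A.ncard = n → A'.ncard = n →
    Iso (R.restrict A) (R.restrict A')

/-- `R` is `(≤n)`-monomorphic. -/
def LeMono (R : OrdBin ι) (n : ℕ) : Prop :=
  ∀ m ≤ n, NMono R m

/-- `R` is monomorphic. -/
def Mono (R : OrdBin ι) : Prop :=
  ∀ n : ℕ, NMono R n

/-- The profile of `R`: the number of induced substructures on `n`-element subsets
of the domain, counted up to isomorphism. -/
noncomputable def profileR (R : OrdBin ι) (n : ℕ) : ℕ :=
  Nat.card (Quot fun (A B : {A : Set R.V // A.Finite ∧ A.ncard = n}) =>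
    Iso (R.restrict A.1) (R.restrict B.1))

/-- The profile of a class `C`: the number of members of `C` with exactly `n`
elements, counted up to isomorphism. -/
noncomputable def profileC (C : Set (OrdBin ι)) (n : ℕ) : ℕ :=
  Nat.card (Quot fun (R S : {R : OrdBin ι // R ∈ C ∧ Nat.card R.V = n}) =>
    Iso R.1 S.1)

end OrdBin

/-- The Fibonacci sequence with `F 0 = F 1 = 1`. -/
def fib1 : ℕ → ℕ
  | 0 => 1
  | 1 => 1
  | n + 2 => fib1 (n + 1) + fib1 n

/-! The interval `A` is a monomorphic part of `R`: finite `S`, `T` of the same size that agree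
outside `A` are isomorphic. Map `S ∩ A` increasingly onto `T ∩ A` and fix `S \ A`. A point outside
the interval `A` lies on the same side of all of `A`, so this map is increasing. An increasing
bijection is an isomorphism once it preserves the substructures on pairs, and it sends each pair
to one differing from it only inside `A`, which `≤1`-equivalence on `A` identifies through at
most two exchanges of a point of `A`. -/

theorem Set.Finite.nonempty_orderIso_of_ncard_eq {α : Type*} [LinearOrder α] {s t : Set α}
    (hs : s.Finite) (ht : t.Finite) (h : s.ncard = t.ncard) : Nonempty (s ≃o t) := by
  have := hs.fintype
  have := ht.fintype
  refine ⟨(Fintype.orderIsoFinOfCardEq s rfl).symm.trans (Fintype.orderIsoFinOfCardEq t ?_)⟩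
  simpa only [← Nat.card_eq_fintype_card, Nat.card_coe_set_eq] using h.symm

namespace OrdBin

variable {ι : Type}

noncomputable abbrev linearOrder (R : OrdBin ι) : LinearOrder R.V :=
  have := R.linear
  { le := R.le
    le_refl := refl_of R.le
    le_trans := fun _ _ _ => trans_of R.le
    le_antisymm := fun _ _ => antisymm_of R.le
    le_total := total_of R.le
    toDecidableLE := Classical.decRel _ }

theorem Iso.refl (R : OrdBin ι) : Iso R R :=
  ⟨Equiv.refl _, fun _ _ => Iff.rfl, fun _ _ _ => Iff.rfl⟩

theorem Iso.trans {R S T : OrdBin ι} : Iso R S → Iso S T → Iso R T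
  | ⟨e, hle, hrel⟩, ⟨e', hle', hrel'⟩ =>
    ⟨e.trans e', fun x y => (hle x y).trans (hle' _ _),
      fun i x y => (hrel i x y).trans (hrel' i _ _)⟩

theorem iso_restrict_of_bijOn {R : OrdBin ι} {S T : Set R.V} (f : R.V → R.V)
    (hf : Set.BijOn f S T) (hle : ∀ p ∈ S, ∀ q ∈ S, R.le p q ↔ R.le (f p) (f q))
    (hrel : ∀ i, ∀ p ∈ S, ∀ q ∈ S, R.rel i p q ↔ R.rel i (f p) (f q)) :
    Iso (R.restrict S) (R.restrict T) :=
  ⟨hf.equiv f, fun x y => hle x.1 x.2 y.1 y.2, fun i x y => hrel i x.1 x.2 y.1 y.2⟩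

theorem rel_iff_of_iso_pair {R : OrdBin ι} {a b a' b' : R.V}
    (h : Iso (R.restrict {a, b}) (R.restrict {a', b'}))
    (hab : R.le a b ↔ R.le a' b') (hba : R.le b a ↔ R.le b' a') (i : ι) :
    R.rel i a b ↔ R.rel i a' b' := by
  have := R.linear
  obtain ⟨e, hle, hrel⟩ := h
  set x : (R.restrict {a, b}).V := ⟨a, by simp⟩
  set y : (R.restrict {a, b}).V := ⟨b, by simp⟩
  have hx : (e x).1 = a' ∨ (e x).1 = b' := (e x).2
  have hy : (e y).1 = a' ∨ (e y).1 = b' := (e y).2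
  have hinj : (e x).1 = (e y).1 → a = b := fun h =>
    congrArg Subtype.val (e.injective (Subtype.ext h))
  have hdeg : a = b → a' = b' := by
    rintro rfl
    exact antisymm_of R.le (hab.1 (refl_of R.le a)) (hba.1 (refl_of R.le a))
  suffices h : (e x).1 = a' ∧ (e y).1 = b' by
    have hxy : R.rel i a b ↔ R.rel i (e x).1 (e y).1 := hrel i x y
    rwa [h.1, h.2] at hxy
  rcases hx with hx | hx <;> rcases hy with hy | hy
  · exact ⟨hx, hy.trans (hdeg (hinj (hx.trans hy.symm)))⟩
  · exact ⟨hx, hy⟩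
  · have hexy : R.le a b ↔ R.le (e x).1 (e y).1 := hle x y
    have heyx : R.le b a ↔ R.le (e y).1 (e x).1 := hle y x
    rw [hx, hy] at hexy heyx
    have : a' = b' := by
      rcases total_of R.le a b with h | h
      · exact antisymm_of R.le (hab.1 h) (hexy.1 h)
      · exact antisymm_of R.le (heyx.1 h) (hba.1 h)
    exact ⟨hx.trans this.symm, hy.trans this⟩
  · exact ⟨hx.trans (hdeg (hinj (hx.trans hy.symm))).symm, hy⟩

theorem IntervalLe.le_iff_le_of_notMem {R : OrdBin ι} {A : Set R.V} (hA : IntervalLe R A)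
    {a b z : R.V} (ha : a ∈ A) (hb : b ∈ A) (hz : z ∉ A) : R.le a z ↔ R.le b z := by
  have := R.linear
  have key : ∀ a b, a ∈ A → b ∈ A → R.le a z → R.le b z := fun a b ha hb haz =>
    (total_of R.le b z).resolve_right fun hzb => hz (hA _ ha _ hb z haz hzb)
  exact ⟨key a b ha hb, key b a hb ha⟩

theorem IntervalLe.le_iff_le_of_notMem' {R : OrdBin ι} {A : Set R.V} (hA : IntervalLe R A)
    {a b z : R.V} (ha : a ∈ A) (hb : b ∈ A) (hz : z ∉ A) : R.le z a ↔ R.le z b := by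
  have := R.linear
  have key : ∀ a b, a ∈ A → b ∈ A → R.le z a → R.le z b := fun a b ha hb hza =>
    (total_of R.le z b).resolve_right fun hbz => hz (hA _ hb _ ha z hbz hza)
  exact ⟨key a b ha hb, key b a hb ha⟩

theorem IntervalLe.exists_increasing_bijOn_of_sdiff_eq {R : OrdBin ι} {A S T : Set R.V}
    (hA : IntervalLe R A) (hS : S.Finite) (hT : T.Finite) (hcard : S.ncard = T.ncard)
    (hdiff : S \ A = T \ A) :
    ∃ f : R.V → R.V, Set.BijOn f S T ∧ (∀ p ∈ S, ∀ q ∈ S, R.le p q ↔ R.le (f p) (f q)) ∧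
      ∀ z ∈ S, z ∈ A ∧ f z ∈ A ∨ z ∉ A ∧ f z = z := by
  classical
  let := R.linearOrder
  have hcardA : (S ∩ A).ncard = (T ∩ A).ncard := by
    have hS' := Set.ncard_inter_add_ncard_sdiff_eq_ncard S A hS
    have hT' := Set.ncard_inter_add_ncard_sdiff_eq_ncard T A hT
    rw [hdiff] at hS'
    omega
  obtain ⟨g⟩ := (hS.inter_of_left A).nonempty_orderIso_of_ncard_eq (hT.inter_of_left A) hcardA
  set f : R.V → R.V := fun z => if h : z ∈ S ∩ A then g ⟨z, h⟩ else z
  have hf_mem : ∀ z (h : z ∈ S ∩ A), f z = g ⟨z, h⟩ := fun z h => dif_pos h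
  have hf_notMem : ∀ z ∉ A, f z = z := fun z hz => dif_neg fun h => hz h.2
  have hf_memT : ∀ z ∈ S, z ∈ A → f z ∈ T ∩ A := fun z hz hzA =>
    hf_mem z ⟨hz, hzA⟩ ▸ (g _).2
  have hle : ∀ p ∈ S, ∀ q ∈ S, R.le p q ↔ R.le (f p) (f q) := by
    intro p hp q hq
    by_cases hpA : p ∈ A <;> by_cases hqA : q ∈ A
    · rw [hf_mem p ⟨hp, hpA⟩, hf_mem q ⟨hq, hqA⟩]
      exact (g.le_iff_le (x := ⟨p, hp, hpA⟩) (y := ⟨q, hq, hqA⟩)).symm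
    · rw [hf_notMem q hqA]
      exact hA.le_iff_le_of_notMem hpA (hf_memT p hp hpA).2 hqA
    · rw [hf_notMem p hpA]
      exact hA.le_iff_le_of_notMem' hqA (hf_memT q hq hqA).2 hpA
    · rw [hf_notMem p hpA, hf_notMem q hqA]
  have hinj : Set.InjOn f S := fun p hp q hq h =>
    le_antisymm ((hle p hp q hq).2 h.le) ((hle q hq p hp).2 h.ge)
  have hmapsTo : Set.MapsTo f S T := by
    intro z hz
    by_cases hzA : z ∈ A
    · exact (hf_memT z hz hzA).1
    · have hzT : z ∈ T \ A := by rw [← hdiff]; exact ⟨hz, hzA⟩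
      rw [hf_notMem z hzA]
      exact hzT.1
  have hsurjOn : Set.SurjOn f S T := by
    intro t ht
    by_cases htA : t ∈ A
    · obtain ⟨⟨s, hs⟩, hst⟩ := g.surjective ⟨t, ht, htA⟩
      exact ⟨s, hs.1, by rw [hf_mem s hs, hst]⟩
    · have htS : t ∈ S \ A := by rw [hdiff]; exact ⟨ht, htA⟩
      exact ⟨t, htS.1, hf_notMem t htA⟩
  refine ⟨f, ⟨hmapsTo, hinj, hsurjOn⟩, hle, fun z hz => ?_⟩
  by_cases hzA : z ∈ A
  · exact Or.inl ⟨hzA, (hf_memT z hz hzA).2⟩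
  · exact Or.inr ⟨hzA, hf_notMem z hzA⟩

section OneEquivalentInterval

variable {R : OrdBin ι} {A : Set R.V} (h1 : ∀ x ∈ A, ∀ y ∈ A, EqLe R 1 x y)
include h1

theorem iso_singleton_of_mem {a b : R.V} (ha : a ∈ A) (hb : b ∈ A) :
    Iso (R.restrict {a}) (R.restrict {b}) := by
  have h := h1 a ha b hb 0 (Nat.zero_le 1) ∅ Set.finite_empty (Set.ncard_empty _)
    (Set.notMem_empty a) (Set.notMem_empty b)
  rwa [EqF, insert_empty_eq, insert_empty_eq] at h

theorem iso_pair_of_mem_left {a b z : R.V} (ha : a ∈ A) (hb : b ∈ A) (hza : z ≠ a)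
    (hzb : z ≠ b) : Iso (R.restrict {a, z}) (R.restrict {b, z}) :=
  h1 a ha b hb 1 le_rfl {z} (Set.finite_singleton z) (Set.ncard_singleton z)
    (Set.notMem_singleton_iff.2 hza.symm) (Set.notMem_singleton_iff.2 hzb.symm)

theorem iso_pair_of_mem {a b c d : R.V} (ha : a ∈ A) (hb : b ∈ A) (hc : c ∈ A) (hd : d ∈ A)
    (hab : a ≠ b) (hcd : c ≠ d) : Iso (R.restrict {a, b}) (R.restrict {c, d}) := by
  by_cases hcb : c = b
  · subst hcb
    rw [Set.pair_comm c d]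
    exact iso_pair_of_mem_left h1 ha hd hab.symm hcd
  · have hcd' : Iso (R.restrict {b, c}) (R.restrict {d, c}) :=
      iso_pair_of_mem_left h1 hb hd hcb hcd
    rw [Set.pair_comm b c, Set.pair_comm d c] at hcd'
    exact (iso_pair_of_mem_left h1 ha hc hab.symm (Ne.symm hcb)).trans hcd'

theorem iso_pair_of_eq_of_notMem {p q p' q' : R.V} (hp : p ∈ A ∧ p' ∈ A ∨ p ∉ A ∧ p' = p)
    (hq : q ∈ A ∧ q' ∈ A ∨ q ∉ A ∧ q' = q) (hpq : p = q ↔ p' = q') :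
    Iso (R.restrict {p, q}) (R.restrict {p', q'}) := by
  rcases hp with ⟨hp, hp'⟩ | ⟨hp, rfl⟩ <;> rcases hq with ⟨hq, hq'⟩ | ⟨hq, rfl⟩
  · by_cases h : p = q
    · subst h
      obtain rfl := hpq.1 rfl
      simpa only [Set.pair_eq_singleton] using iso_singleton_of_mem h1 hp hp'
    · exact iso_pair_of_mem h1 hp hq hp' hq' h (mt hpq.2 h)
  · exact iso_pair_of_mem_left h1 hp hp' (fun h => hq (h ▸ hp)) (fun h => hq (h ▸ hp'))
  · rw [Set.pair_comm _ q, Set.pair_comm _ q']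
    exact iso_pair_of_mem_left h1 hq hq' (fun h => hp (h ▸ hq)) (fun h => hp (h ▸ hq'))
  · exact Iso.refl _

theorem monoPart_of_intervalLe (hA : IntervalLe R A) : MonoPart R A := by
  intro S T hS hT hcard hdiff
  obtain ⟨f, hf, hle, hA_f⟩ := hA.exists_increasing_bijOn_of_sdiff_eq hS hT hcard hdiff
  refine iso_restrict_of_bijOn f hf hle fun i p hp q hq => ?_
  exact rel_iff_of_iso_pair (iso_pair_of_eq_of_notMem h1 (hA_f p hp) (hA_f q hq)
    (hf.injOn.eq_iff hp hq).symm) (hle p hp q hq) (hle q hq p hp) i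

end OneEquivalentInterval

end OrdBin

/-- If `A` is an interval of the linear order `(V, ≤)` and any two elements
of `A` are `≃_{≤1,R}`-equivalent, then any two elements of `A` are `≃_{≤2,R}`-equivalent. -/
theorem interval_one_equiv_to_two_equiv {ι : Type} (R : OrdBin ι)
    (A : Set R.V) (hA : OrdBin.IntervalLe R A)
    (h1 : ∀ x ∈ A, ∀ y ∈ A, OrdBin.EqLe R 1 x y) :
    ∀ x ∈ A, ∀ y ∈ A, OrdBin.EqLe R 2 x y := by
  intro x hx y hy _ _ F hF _ hxF hyF
  refine OrdBin.monoPart_of_intervalLe h1 hA _ _ (hF.insert x) (hF.insert y) ?_ ?_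
  · rw [Set.ncard_insert_of_notMem hxF hF, Set.ncard_insert_of_notMem hyF hF]
  · rw [Set.insert_sdiff_of_mem F hx, Set.insert_sdiff_of_mem F hy]
end

section
/- For every ordered binary structure R = (V, ≤, (ρ_i)_{i∈I}), the equivalence relations ≃_{≤2,R} and ≃_R coincide: for all x, y ∈ V, x ≃_{≤2,R} y if and only if x ≃_R y. -/
/-!
Let `x < y` with `x ≃_{≤2,R} y`. Comparing `{x} ∪ F` with `{y} ∪ F` for `|F| ≤ 2` shows that all
elements of `[x, y]` have the same loops and the same relations to each element outside `[x, y]`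
(so `[x, y]` is an interval of `R`), and that all pairs `p < q` in `[x, y]` other than `(x, y)`
have the same type. For an arbitrary finite `F`, the parts of `{x} ∪ F` and `{y} ∪ F` inside
`[x, y]` are then chains of equal length and of one uniform type, hence isomorphic, and an
isomorphism between the parts inside an interval extends by the identity outside it.
-/

namespace OrdBin

variable {ι : Type}

noncomputable instance instLinearOrderV (R : OrdBin ι) : LinearOrder R.V :=
  have := R.linear
  { le := R.le
    le_refl := refl_of R.le
    le_trans := fun _ _ _ => trans_of R.le
    le_antisymm := fun _ _ => antisymm_of R.le
    le_total := total_of R.le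
    toDecidableLE := Classical.decRel _ }

theorem dEq_refl (R : OrdBin ι) (p q : R.V) : dEq R p q p q := fun _ => ⟨Iff.rfl, Iff.rfl⟩

theorem dEq.symm {R : OrdBin ι} {p q p' q' : R.V} (h : dEq R p q p' q') : dEq R p' q' p q :=
  fun i => ⟨(h i).1.symm, (h i).2.symm⟩

theorem dEq.trans {R : OrdBin ι} {p q p' q' p'' q'' : R.V} (h : dEq R p q p' q')
    (h' : dEq R p' q' p'' q'') : dEq R p q p'' q'' :=
  fun i => ⟨(h i).1.trans (h' i).1, (h i).2.trans (h' i).2⟩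

section Iso

variable {R : OrdBin ι}

theorem Iso.symm {S : OrdBin ι} : Iso R S → Iso S R := by
  rintro ⟨e, hle, hrel⟩
  refine ⟨e.symm, fun a b => ?_, fun i a b => ?_⟩
  · rw [hle, e.apply_symm_apply, e.apply_symm_apply]
  · rw [hrel, e.apply_symm_apply, e.apply_symm_apply]

theorem iso_restrict_iff {A B : Set R.V} :
    Iso (R.restrict A) (R.restrict B) ↔
      ∃ e : A ≃o B, ∀ (i : ι) (a b : A), R.rel i a b ↔ R.rel i (e a) (e b) :=
  ⟨fun ⟨e, hle, hrel⟩ => ⟨⟨e, (hle _ _).symm⟩, hrel⟩,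
    fun ⟨e, hrel⟩ => ⟨e.toEquiv, fun _ _ => e.le_iff_le.symm, hrel⟩⟩

theorem rel_iff_of_iso_range {k : ℕ} {f g : Fin k → R.V} (hf : StrictMono f) (hg : StrictMono g)
    (h : Iso (R.restrict (Set.range f)) (R.restrict (Set.range g))) (i : ι) (j l : Fin k) :
    R.rel i (f j) (f l) ↔ R.rel i (g j) (g l) := by
  obtain ⟨e, he⟩ := iso_restrict_iff.1 h
  -- an order automorphism of `Fin k` is the identity
  have hfg : ∀ j, (e ⟨f j, j, rfl⟩ : R.V) = g j := fun j => by
    have hj : (hg.orderIso g).symm (e (hf.orderIso f j)) = j := congrArg (· j)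
      (Subsingleton.elim ((hf.orderIso f).trans (e.trans (hg.orderIso g).symm)) (OrderIso.refl _))
    exact congrArg Subtype.val ((OrderIso.symm_apply_eq _).1 hj)
  rw [he i ⟨f j, j, rfl⟩ ⟨f l, l, rfl⟩, hfg, hfg]

theorem iso_restrict_of_forall_dEq {A B : Set R.V} (hA : A.Finite) (hB : B.Finite)
    (hcard : A.ncard = B.ncard) (hloop : ∀ a ∈ A, ∀ b ∈ B, ∀ i, R.rel i a a ↔ R.rel i b b)
    (hpair : ∀ a ∈ A, ∀ a' ∈ A, ∀ b ∈ B, ∀ b' ∈ B, a < a' → b < b' → dEq R a a' b b') :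
    Iso (R.restrict A) (R.restrict B) := by
  have := hA.fintype
  have := hB.fintype
  have hcard' : Fintype.card A = Fintype.card B := by
    simpa only [Fintype.card_eq_nat_card, Nat.card_coe_set_eq] using hcard
  let e : A ≃o B :=
    (Fintype.orderIsoFinOfCardEq A hcard').symm.trans (Fintype.orderIsoFinOfCardEq B rfl)
  refine iso_restrict_iff.2 ⟨e, fun i a b => ?_⟩
  rcases lt_trichotomy a b with hab | rfl | hab
  · exact (hpair a a.2 b b.2 (e a) (e a).2 (e b) (e b).2 hab (e.strictMono hab) i).1
  · exact hloop a a.2 (e a) (e a).2 i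
  · exact (hpair b b.2 a a.2 (e b) (e b).2 (e a) (e a).2 hab (e.strictMono hab) i).2

theorem IntervalLe.lt_iff_lt {J : Set R.V} (hJ : IntervalLe R J) {u u' w : R.V} (hu : u ∈ J)
    (hu' : u' ∈ J) (hw : w ∉ J) : u < w ↔ u' < w := by
  have key : ∀ {u u'}, u ∈ J → u' ∈ J → u < w → u' < w := fun hu hu' huw =>
    lt_of_not_ge fun hwu' => hw (hJ _ hu _ hu' w huw.le hwu')
  exact ⟨key hu hu', key hu' hu⟩

theorem iso_restrict_of_intervalR {J A B : Set R.V} (hJ : IntervalR R J) (hAB : A \ J = B \ J)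
    (h : Iso (R.restrict (A ∩ J)) (R.restrict (B ∩ J))) : Iso (R.restrict A) (R.restrict B) := by
  classical
  obtain ⟨e, he⟩ := iso_restrict_iff.1 h
  have hAB' : A \ (A ∩ J) = B \ (B ∩ J) := by rwa [Set.sdiff_self_inter, Set.sdiff_self_inter]
  let E : A ≃ B := (Equiv.Set.sumDiffSubset Set.inter_subset_left).symm.trans
    ((e.toEquiv.sumCongr (Equiv.setCongr hAB')).trans
      (Equiv.Set.sumDiffSubset Set.inter_subset_left))
  have hE_mem : ∀ (a : A) (ha : a.1 ∈ J), (E a : R.V) = e ⟨a, a.2, ha⟩ := fun a ha => by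
    simp [E, Equiv.Set.sumDiffSubset_symm_apply_of_mem (h := Set.inter_subset_left) (x := a)
      ⟨a.2, ha⟩]
  have hE_out : ∀ (a : A), a.1 ∉ J → (E a : R.V) = a := fun a ha => by
    simp [E, Equiv.Set.sumDiffSubset_symm_apply_of_notMem (h := Set.inter_subset_left) (x := a)
      fun h => ha h.2]
  refine iso_restrict_iff.2 ⟨⟨E, fun {a b} => ?_⟩, fun i a b => ?_⟩
  · change (E a : R.V) ≤ E b ↔ a.1 ≤ b.1
    by_cases ha : a.1 ∈ J <;> by_cases hb : b.1 ∈ J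
    · rw [hE_mem a ha, hE_mem b hb]
      exact e.le_iff_le
    · rw [hE_mem a ha, hE_out b hb, (ne_of_mem_of_not_mem (e _).2.2 hb).le_iff_lt,
        (ne_of_mem_of_not_mem ha hb).le_iff_lt]
      exact hJ.1.lt_iff_lt (e _).2.2 ha hb
    · rw [hE_out a ha, hE_mem b hb, ← not_lt, ← not_lt, hJ.1.lt_iff_lt (e _).2.2 hb ha]
    · rw [hE_out a ha, hE_out b hb]
  · change R.rel i a b ↔ R.rel i (E a) (E b)
    by_cases ha : a.1 ∈ J <;> by_cases hb : b.1 ∈ J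
    · rw [hE_mem a ha, hE_mem b hb]
      exact he i ⟨a, a.2, ha⟩ ⟨b, b.2, hb⟩
    · rw [hE_mem a ha, hE_out b hb]
      exact (hJ.2 a ha _ (e _).2.2 b hb i).1
    · rw [hE_out a ha, hE_mem b hb]
      exact (hJ.2 b hb _ (e _).2.2 a ha i).2
    · rw [hE_out a ha, hE_out b hb]

end Iso

section EqLe

variable {R : OrdBin ι} {x y : R.V}

theorem EqLe.symm {m : ℕ} (h : EqLe R m x y) : EqLe R m y x :=
  fun m' hm' F hF hc hy hx => Iso.symm (h m' hm' F hF hc hx hy)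

theorem EqLe.rel_iff {m k : ℕ} (h : EqLe R m x y) (hk : k ≤ m + 1) {F : Set R.V} (hxF : x ∉ F)
    (hyF : y ∉ F) {f g : Fin k → R.V} (hf : StrictMono f) (hg : StrictMono g)
    (hfF : Set.range f = insert x F) (hgF : Set.range g = insert y F) (i : ι) (j l : Fin k) :
    R.rel i (f j) (f l) ↔ R.rel i (g j) (g l) := by
  have hF : F.Finite := (Set.finite_range f).subset (hfF ▸ Set.subset_insert x F)
  have hcard : F.ncard + 1 = k := by
    rw [← Set.ncard_insert_of_notMem hxF hF, ← hfF, Set.ncard_range_of_injective hf.injective,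
      Nat.card_eq_fintype_card, Fintype.card_fin]
  refine rel_iff_of_iso_range hf hg ?_ i j l
  rw [hfF, hgF]
  exact h _ (by omega) F hF rfl hxF hyF

theorem EqLe.rel_self_iff {m : ℕ} (h : EqLe R m x y) (i : ι) : R.rel i x x ↔ R.rel i y y :=
  h.rel_iff (F := ∅) (f := ![x]) (g := ![y]) (by norm_num) (Set.notMem_empty x)
    (Set.notMem_empty y) (by simp) (by simp) (by simp) (by simp) i 0 0

theorem EqLe.dEq_and_rel_self_of_mem_Ioo (h : EqLe R 2 x y) {p : R.V} (hp : p ∈ Set.Ioo x y) :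
    dEq R x p p y ∧ ∀ i, R.rel i x x ↔ R.rel i p p := by
  have key := h.rel_iff (F := {p}) (f := ![x, p]) (g := ![p, y]) (by norm_num)
    (by simpa using hp.1.ne) (by simpa using hp.2.ne') (by simpa using hp.1) (by simpa using hp.2)
    (by ext; simp [Matrix.range_cons]; tauto) (by ext; simp [Matrix.range_cons])
  exact ⟨fun i => ⟨key i 0 1, key i 1 0⟩, fun i => key i 0 0⟩

theorem EqLe.dEq_of_notMem_Icc (h : EqLe R 2 x y) (hxy : x < y) {w : R.V}
    (hw : w ∉ Set.Icc x y) : dEq R x w y w := by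
  rcases lt_or_gt_of_ne (show w ≠ x by rintro rfl; simp [hxy.le] at hw) with hwx | hxw
  · have key := h.rel_iff (F := {w}) (f := ![w, x]) (g := ![w, y]) (by norm_num)
      (by simpa using hwx.ne') (by simpa using (hwx.trans hxy).ne') (by simpa using hwx)
      (by simpa using hwx.trans hxy) (by ext; simp [Matrix.range_cons])
      (by ext; simp [Matrix.range_cons])
    exact fun i => ⟨key i 1 0, key i 0 1⟩
  · have hyw : y < w := lt_of_not_ge fun hwy => hw ⟨hxw.le, hwy⟩
    have key := h.rel_iff (F := {w}) (f := ![x, w]) (g := ![y, w]) (by norm_num)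
      (by simpa using hxw.ne) (by simpa using hyw.ne) (by simpa using hxw)
      (by simpa using hyw) (by ext; simp [Matrix.range_cons]; tauto)
      (by ext; simp [Matrix.range_cons]; tauto)
    exact fun i => ⟨key i 0 1, key i 1 0⟩

theorem EqLe.dEq_of_mem_Ioo_of_notMem_Icc (h : EqLe R 2 x y) {p w : R.V} (hp : p ∈ Set.Ioo x y)
    (hw : w ∉ Set.Icc x y) : dEq R x w p w := by
  obtain ⟨hxp, hpy⟩ := hp
  rcases lt_or_gt_of_ne (show w ≠ x by rintro rfl; simp [(hxp.trans hpy).le] at hw) with hwx | hxw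
  · have key := h.rel_iff (F := {p, w}) (f := ![w, x, p]) (g := ![w, p, y]) (by norm_num)
      (by simp [hxp.ne, hwx.ne']) (by simp [hpy.ne', (hwx.trans (hxp.trans hpy)).ne'])
      (by simp [hwx, hxp]) (by simp [hwx.trans hxp, hpy])
      (by ext; simp [Matrix.range_cons]; tauto)
      (by ext; simp [Matrix.range_cons])
    exact fun i => ⟨key i 1 0, key i 0 1⟩
  · have hyw : y < w := lt_of_not_ge fun hwy => hw ⟨hxw.le, hwy⟩
    have key := h.rel_iff (F := {p, w}) (f := ![x, p, w]) (g := ![p, y, w]) (by norm_num)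
      (by simp [hxp.ne, hxw.ne]) (by simp [hpy.ne', hyw.ne])
      (by simp [hxp, hpy.trans hyw]) (by simp [hpy, hyw])
      (by ext; simp [Matrix.range_cons]; tauto)
      (by ext; simp [Matrix.range_cons]; tauto)
    exact fun i => ⟨key i 0 2, key i 2 0⟩

theorem EqLe.dEq_of_lt_of_lt_of_lt (h : EqLe R 2 x y) {p q : R.V} (hxp : x < p) (hpq : p < q)
    (hqy : q < y) : dEq R x p p q ∧ dEq R x q p y := by
  have key := h.rel_iff (F := {p, q}) (f := ![x, p, q]) (g := ![p, q, y]) (by norm_num)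
    (by simp [hxp.ne, (hxp.trans hpq).ne]) (by simp [(hpq.trans hqy).ne', hqy.ne'])
    (by simp [hxp, hpq]) (by simp [hpq, hqy])
    (by ext; simp [Matrix.range_cons]; tauto)
    (by ext; simp [Matrix.range_cons]; tauto)
  exact ⟨fun i => ⟨key i 0 1, key i 1 0⟩, fun i => ⟨key i 0 2, key i 2 0⟩⟩

theorem EqLe.rel_self_iff_of_mem_Icc (h : EqLe R 2 x y) {p : R.V} (hp : p ∈ Set.Icc x y)
    (i : ι) : R.rel i p p ↔ R.rel i x x := by
  rcases hp.1.eq_or_lt with rfl | hxp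
  · rfl
  rcases hp.2.eq_or_lt with rfl | hpy
  · exact (h.rel_self_iff i).symm
  · exact ((h.dEq_and_rel_self_of_mem_Ioo ⟨hxp, hpy⟩).2 i).symm

theorem EqLe.dEq_of_mem_Icc_of_notMem (h : EqLe R 2 x y) (hxy : x < y) {p w : R.V}
    (hp : p ∈ Set.Icc x y) (hw : w ∉ Set.Icc x y) : dEq R p w x w := by
  rcases hp.1.eq_or_lt with rfl | hxp
  · exact dEq_refl R _ w
  rcases hp.2.eq_or_lt with rfl | hpy
  · exact (h.dEq_of_notMem_Icc hxy hw).symm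
  · exact (h.dEq_of_mem_Ioo_of_notMem_Icc ⟨hxp, hpy⟩ hw).symm

theorem EqLe.intervalR_Icc (h : EqLe R 2 x y) (hxy : x < y) : IntervalR R (Set.Icc x y) :=
  ⟨fun _ hu _ hw _ huz hzw => ⟨le_trans hu.1 huz, le_trans hzw hw.2⟩, fun _ hu _ hu' _ hw =>
    (h.dEq_of_mem_Icc_of_notMem hxy hu hw).trans (h.dEq_of_mem_Icc_of_notMem hxy hu' hw).symm⟩

theorem EqLe.dEq_left_of_mem_Ioo (h : EqLe R 2 x y) {p q : R.V} (hp : p ∈ Set.Ioo x y)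
    (hq : q ∈ Set.Ioo x y) : dEq R x p x q := by
  have key : ∀ {p q}, p ∈ Set.Ioo x y → q ∈ Set.Ioo x y → p < q → dEq R x p x q :=
    fun hp hq hpq => (h.dEq_and_rel_self_of_mem_Ioo hp).1.trans
      (h.dEq_of_lt_of_lt_of_lt hp.1 hpq hq.2).2.symm
  rcases lt_trichotomy p q with hpq | rfl | hqp
  · exact key hp hq hpq
  · exact dEq_refl R x p
  · exact (key hq hp hqp).symm

theorem EqLe.exists_dEq_of_lt (h : EqLe R 2 x y) {p q : R.V} (hxp : x ≤ p) (hpq : p < q)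
    (hqy : q ≤ y) (hpq_ne : x < p ∨ q < y) : ∃ z ∈ Set.Ioo x y, dEq R p q x z := by
  rcases hxp.eq_or_lt with rfl | hxp
  · exact ⟨q, ⟨hpq, hpq_ne.resolve_left (lt_irrefl _)⟩, dEq_refl R _ q⟩
  rcases hqy.eq_or_lt with rfl | hqy
  · exact ⟨p, ⟨hxp, hpq⟩, (h.dEq_and_rel_self_of_mem_Ioo ⟨hxp, hpq⟩).1.symm⟩
  · exact ⟨p, ⟨hxp, hpq.trans hqy⟩, (h.dEq_of_lt_of_lt_of_lt hxp hpq hqy).1.symm⟩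

theorem EqLe.dEq_of_lt (h : EqLe R 2 x y) {p q p' q' : R.V} (hxp : x ≤ p) (hpq : p < q)
    (hqy : q ≤ y) (hpq_ne : x < p ∨ q < y) (hxp' : x ≤ p') (hpq' : p' < q') (hqy' : q' ≤ y)
    (hpq_ne' : x < p' ∨ q' < y) : dEq R p q p' q' := by
  obtain ⟨z, hz, hpqz⟩ := h.exists_dEq_of_lt hxp hpq hqy hpq_ne
  obtain ⟨z', hz', hpqz'⟩ := h.exists_dEq_of_lt hxp' hpq' hqy' hpq_ne'
  exact hpqz.trans ((h.dEq_left_of_mem_Ioo hz hz').trans hpqz'.symm)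

theorem EqLe.eqF_of_lt (h : EqLe R 2 x y) (hxy : x < y) {F : Set R.V} (hF : F.Finite)
    (hxF : x ∉ F) (hyF : y ∉ F) : EqF R F x y := by
  have hx : x ∈ Set.Icc x y := Set.left_mem_Icc.2 hxy.le
  have hy : y ∈ Set.Icc x y := Set.right_mem_Icc.2 hxy.le
  refine iso_restrict_of_intervalR (h.intervalR_Icc hxy) (by simp [hx, hy]) ?_
  rw [Set.insert_inter_of_mem hx, Set.insert_inter_of_mem hy]
  have hxF' : x ∉ F ∩ Set.Icc x y := fun h' => hxF h'.1
  have hyF' : y ∉ F ∩ Set.Icc x y := fun h' => hyF h'.1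
  have hA : ∀ a ∈ insert x (F ∩ Set.Icc x y), a ∈ Set.Icc x y ∧ a < y := by
    rintro a (rfl | ⟨haF, ha⟩)
    exacts [⟨hx, hxy⟩, ⟨ha, ha.2.lt_of_ne (ne_of_mem_of_not_mem haF hyF)⟩]
  have hB : ∀ b ∈ insert y (F ∩ Set.Icc x y), b ∈ Set.Icc x y ∧ x < b := by
    rintro b (rfl | ⟨hbF, hb⟩)
    exacts [⟨hy, hxy⟩, ⟨hb, hb.1.lt_of_ne (ne_of_mem_of_not_mem hbF hxF).symm⟩]
  refine iso_restrict_of_forall_dEq ((hF.inter_of_left _).insert x)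
    ((hF.inter_of_left _).insert y) ?_ (fun a ha b hb i => ?_)
    (fun a ha a' ha' b hb b' hb' haa' hbb' => ?_)
  · rw [Set.ncard_insert_of_notMem hxF' (hF.inter_of_left _),
      Set.ncard_insert_of_notMem hyF' (hF.inter_of_left _)]
  · exact (h.rel_self_iff_of_mem_Icc (hA a ha).1 i).trans
      (h.rel_self_iff_of_mem_Icc (hB b hb).1 i).symm
  · exact h.dEq_of_lt (hA a ha).1.1 haa' (hA a' ha').1.2 (Or.inr (hA a' ha').2)
      (hB b hb).1.1 hbb' (hB b' hb').1.2 (Or.inl (hB b hb).2)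

end EqLe

end OrdBin

/-- On an ordered binary structure `R`, the equivalence relations
`≃_{≤2,R}` and `≃_R` coincide. -/
theorem eqLe_two_iff_eqR {ι : Type} (R : OrdBin ι) :
    ∀ x y : R.V, OrdBin.EqLe R 2 x y ↔ OrdBin.EqR R x y := by
  intro x y
  refine ⟨fun h m F hF _ hxF hyF => ?_, fun h m _ => h m⟩
  rcases lt_trichotomy x y with hxy | rfl | hxy
  · exact h.eqF_of_lt hxy hF hxF hyF
  · exact OrdBin.Iso.refl _
  · exact OrdBin.Iso.symm (h.symm.eqF_of_lt hxy hF hyF hxF)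
end
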